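/- There exists a correct adaptive sorting strategy of depth 4 in the two-unknown-weights model on 6 coins with the additional property that whether all coins have the same weight is already detected by the third weighing; precisely, for every heavy set H ⊆ Fin 6 with H ≠ ∅ and H ≠ Fin 6, at least one of the first 3 outcomes produced by H is not 'equal' (the explicitly constructed n = 6 algorithm from which Lemma 3 is derived). -/

import Mathlib

/-!
Adaptive sorting model with two unknown weights and no reference coins.
Coins are the elements of `Fin n`; an unknown heavy set `H : Finset (Fin n)`
is fixed (`H = ∅` and `H = univ` both mean that all coins weigh the same).
A weighing is a pair `(L, R)` of disjoint subsets of `Fin n` with `|L| = |R|`,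
and its outcome is the three-valued comparison of `|L ∩ H|` and `|R ∩ H|`.
-/

/-- Outcome of weighing pans `L` and `R` when the heavy set is `H`. -/
def weighOutcome {n : ℕ} (L R H : Finset (Fin n)) : Ordering :=
  compare (L ∩ H).card (R ∩ H).card

/-- The outcome sequence produced by heavy set `H` after `k` weighings of the
adaptive strategy `weigh` (which assigns a weighing to each outcome history). -/
def runList {n : ℕ} (weigh : List Ordering → Finset (Fin n) × Finset (Fin n))
    (H : Finset (Fin n)) : ℕ → List Ordering
  | 0 => []
  | k + 1 =>
    let σ := runList weigh H k
    σ ++ [weighOutcome (weigh σ).1 (weigh σ).2 H]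

/-- `(weigh, answer)` is a correct adaptive sorting strategy of depth `k` on
`n` coins in the two-unknown-weights model: every prescribed weighing has
disjoint pans of equal size, and for every heavy set `H` the answer at the
outcome sequence produced by `H` equals `H`, except that when `H` is `∅` or
`univ` it suffices that the answer be `∅` or `univ`. -/
def IsCorrectSorting (n k : ℕ)
    (weigh : List Ordering → Finset (Fin n) × Finset (Fin n))
    (answer : List Ordering → Finset (Fin n)) : Prop :=
  (∀ σ : List Ordering, σ.length < k →
      Disjoint (weigh σ).1 (weigh σ).2 ∧ (weigh σ).1.card = (weigh σ).2.card) ∧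
  (∀ H : Finset (Fin n),
      ((H = ∅ ∨ H = Finset.univ) →
        (answer (runList weigh H k) = ∅ ∨ answer (runList weigh H k) = Finset.univ)) ∧
      (H ≠ ∅ → H ≠ Finset.univ → answer (runList weigh H k) = H))

/-- There is a correct adaptive sorting strategy of depth `k` on `n` coins. -/
def HasSorting (n k : ℕ) : Prop :=
  ∃ weigh answer, IsCorrectSorting n k weigh answer

/-- `ḡ n` is the least number of weighings sufficient to sort `n` coins of two
possible distinct weights by a balance. -/
noncomputable def gbar (n : ℕ) : ℕ := sInf {k | HasSorting n k}

/-!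
Every balanced weighing leaves the trivial heavy sets `∅` and `univ` in equilibrium, so both
produce the all-`eq` run. Hence a strategy with balanced weighings is a correct sorting strategy,
with the answer read off by inverting the run map, as soon as distinct nontrivial heavy sets
produce distinct runs and none of them produces the all-`eq` run. For the six-coin strategy
of the paper these facts, as well as an unbalanced outcome among the first three for every
nontrivial heavy set, are finite checks over the 64 heavy sets.
-/

section Runs

variable {n : ℕ} (weigh : List Ordering → Finset (Fin n) × Finset (Fin n))

theorem runList_length (H : Finset (Fin n)) (k : ℕ) : (runList weigh H k).length = k := by
  induction k with
  | zero => rfl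
  | succ k ih => simp [runList, ih]

theorem runList_isPrefix (H : Finset (Fin n)) {k m : ℕ} (hkm : k ≤ m) :
    runList weigh H k <+: runList weigh H m := by
  induction m, hkm using Nat.le_induction with
  | base => exact List.prefix_refl _
  | succ m _ ih => exact ih.trans (List.prefix_append _ _)

theorem runList_ne_replicate_of_mem (H : Finset (Fin n)) {k m : ℕ} (hkm : k ≤ m) {o : Ordering}
    (ho : o ∈ runList weigh H k) (hne : o ≠ .eq) :
    runList weigh H m ≠ List.replicate m .eq := fun h =>
  hne (List.eq_of_mem_replicate (h ▸ (runList_isPrefix weigh H hkm).subset ho))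

theorem runList_eq_replicate (H : Finset (Fin n)) (k : ℕ)
    (h : ∀ σ : List Ordering, σ.length < k → ((weigh σ).1 ∩ H).card = ((weigh σ).2 ∩ H).card) :
    runList weigh H k = List.replicate k .eq := by
  induction k with
  | zero => rfl
  | succ k ih =>
    have hk := h (runList weigh H k) ((runList_length weigh H k).trans_lt k.lt_succ_self)
    rw [runList, List.replicate_succ', ← ih fun σ hσ => h σ (hσ.trans k.lt_succ_self),
      weighOutcome, hk, compare_eq_iff_eq.mpr rfl]

theorem runList_empty (k : ℕ) : runList weigh ∅ k = List.replicate k .eq :=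
  runList_eq_replicate weigh ∅ k fun _ _ => by simp

theorem runList_univ (k : ℕ)
    (hbal : ∀ σ : List Ordering, σ.length < k → (weigh σ).1.card = (weigh σ).2.card) :
    runList weigh Finset.univ k = List.replicate k .eq :=
  runList_eq_replicate weigh _ k fun σ hσ => by simpa using hbal σ hσ

open Classical in
noncomputable def decodeRun (k : ℕ) (σ : List Ordering) : Finset (Fin n) :=
  if h : ∃ H, runList weigh H k = σ then h.choose else ∅

theorem runList_decodeRun (H : Finset (Fin n)) (k : ℕ) :
    runList weigh (decodeRun weigh k (runList weigh H k)) k = runList weigh H k := by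
  have h : ∃ H', runList weigh H' k = runList weigh H k := ⟨H, rfl⟩
  rw [decodeRun, dif_pos h]
  exact h.choose_spec

theorem isCorrectSorting_decodeRun {k : ℕ}
    (hbal : ∀ σ : List Ordering, σ.length < k →
      Disjoint (weigh σ).1 (weigh σ).2 ∧ (weigh σ).1.card = (weigh σ).2.card)
    (hinj : Set.InjOn (runList weigh · k) {H | H ≠ ∅ ∧ H ≠ Finset.univ})
    (hsep : ∀ H : Finset (Fin n), H ≠ ∅ → H ≠ Finset.univ →
      runList weigh H k ≠ List.replicate k .eq) :
    IsCorrectSorting n k weigh (decodeRun weigh k) := by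
  have htriv : ∀ H : Finset (Fin n), H = ∅ ∨ H = Finset.univ →
      runList weigh H k = List.replicate k .eq := by
    rintro H (rfl | rfl)
    exacts [runList_empty weigh k, runList_univ weigh k fun σ hσ => (hbal σ hσ).2]
  refine ⟨hbal, fun H => ⟨fun hH => ?_, fun h0 hu => ?_⟩⟩
  all_goals
    have hdec := runList_decodeRun weigh H k
    set H' := decodeRun weigh k (runList weigh H k)
  · by_contra hH'
    obtain ⟨h0', hu'⟩ := not_or.mp hH'
    exact hsep H' h0' hu' (hdec.trans (htriv H hH))
  · by_cases hH' : H' = ∅ ∨ H' = Finset.univ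
    · exact absurd ((htriv H' hH').symm.trans hdec).symm (hsep H h0 hu)
    · exact hinj (not_or.mp hH') ⟨h0, hu⟩ hdec

end Runs

def orientRun : List Ordering → List Ordering
  | [] => []
  | .eq :: σ => .eq :: orientRun σ
  | .lt :: σ => .lt :: σ
  | .gt :: σ => .lt :: σ.map Ordering.swap

/-- Complementing the heavy set swaps every outcome, so the weighings are only listed for runs
whose first unbalanced outcome is `lt`; the other runs are first swapped into that form. -/
def sixCoinWeigh (σ : List Ordering) : Finset (Fin 6) × Finset (Fin 6) :=
  match orientRun σ with
  | [] => ({0,1}, {2,3})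
  | [.lt] => ({0,2}, {1,3})
  | [.lt, .lt] => ({1,2}, {4,5})
  | [.lt, .lt, .eq] => ({0}, {1})
  | [.lt, .lt, _] => ({4}, {5})
  | [.lt, .eq] => ({0}, {4})
  | [.lt, .eq, _] => ({0}, {5})
  | [.lt, .gt] => ({0,3}, {4,5})
  | [.lt, .gt, .eq] => ({0}, {1})
  | [.lt, .gt, _] => ({4}, {5})
  | [.eq] => ({0}, {1})
  | [.eq, .lt] => ({2,4}, {3,5})
  | [.eq, .lt, .eq] => ({0}, {2})
  | [.eq, .lt, _] => ({0,1}, {4,5})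
  | [.eq, .eq] => ({0,1}, {4,5})
  | [.eq, .eq, _] => ({4}, {5})
  | _ => (∅, ∅)

theorem sixCoinWeigh_balanced (σ : List Ordering) :
    Disjoint (sixCoinWeigh σ).1 (sixCoinWeigh σ).2 ∧
      (sixCoinWeigh σ).1.card = (sixCoinWeigh σ).2.card := by
  unfold sixCoinWeigh
  split <;> decide

theorem sixCoinWeigh_detects (H : Finset (Fin 6)) (h0 : H ≠ ∅) (hu : H ≠ Finset.univ) :
    ∃ o ∈ runList sixCoinWeigh H 3, o ≠ .eq := by
  revert H
  decide

theorem sixCoinWeigh_injOn :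
    Set.InjOn (runList sixCoinWeigh · 4) {H | H ≠ ∅ ∧ H ≠ Finset.univ} := by
  simpa using Finset.injOn_of_card_image_eq (f := (runList sixCoinWeigh · 4))
    (s := Finset.univ.filter fun H : Finset (Fin 6) => H ≠ ∅ ∧ H ≠ Finset.univ) (by decide)

/-- **The `n = 6` algorithm of Lemma 3.** There is a correct adaptive sorting
strategy of depth `4` on `6` coins such that whether all coins have the same
weight is already detected by the third weighing: for every heavy set `H`
other than `∅` and `univ`, one of the first `3` outcomes produced by `H` is
not `eq`. -/
theorem sort_six_in_four_detect_three :
    ∃ (weigh : List Ordering → Finset (Fin 6) × Finset (Fin 6))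
      (answer : List Ordering → Finset (Fin 6)),
      IsCorrectSorting 6 4 weigh answer ∧
      ∀ H : Finset (Fin 6), H ≠ ∅ → H ≠ Finset.univ →
        ∃ o ∈ runList weigh H 3, o ≠ Ordering.eq := by
  refine ⟨sixCoinWeigh, decodeRun sixCoinWeigh 4, ?_, sixCoinWeigh_detects⟩
  refine isCorrectSorting_decodeRun sixCoinWeigh (fun σ _ => sixCoinWeigh_balanced σ)
    sixCoinWeigh_injOn fun H h0 hu => ?_
  obtain ⟨o, ho, hne⟩ := sixCoinWeigh_detects H h0 hu
  exact runList_ne_replicate_of_mem sixCoinWeigh H (by norm_num) ho hne
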